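/- Ising (face-spin) parametrization of the cycle space: let F = (Fin L × Fin L) ⊕ {outer} be the set of faces of the L×L square lattice (the L² plaquettes together with one outer face). Each edge e is adjacent to exactly two faces: a horizontal edge {(i,j),(i+1,j)} is adjacent to plaquette (i,j) (or outer if j = L) and plaquette (i,j-1) (or outer if j = 0); a vertical edge {(i,j),(i,j+1)} is adjacent to plaquette (i,j) (or outer if i = L) and plaquette (i-1,j) (or outer if i = 0). Then the 𝔽₂-linear map Ψ sending a face configuration σ : F → ZMod 2 to the 1-chain x with x_e = σ_f + σ_g (f, g the two faces adjacent to e) has image exactly the cycle space 𝒵, and its kernel consists exactly of the two constant configurations; hence Ψ is two-to-one onto 𝒵. -/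

import Mathlib

open Finset

/-- Edges of the L×L square lattice: `horiz i j` is the edge from (i,j) to (i+1,j),
`vert i j` is the edge from (i,j) to (i,j+1). -/
inductive Edge (L : ℕ) where
  | horiz : Fin L → Fin (L+1) → Edge L
  | vert  : Fin (L+1) → Fin L → Edge L
deriving DecidableEq, Fintype

/-- Vertices of the L×L square lattice. -/
abbrev Vertex (L : ℕ) := Fin (L+1) × Fin (L+1)

/-- The two endpoints of an edge. -/
def Edge.ends {L : ℕ} : Edge L → Vertex L × Vertex L
  | .horiz i j => ((i.castSucc, j), (i.succ, j))
  | .vert i j  => ((i, j.castSucc), (i, j.succ))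

/-- A vertex is incident to an edge iff it is one of its endpoints. -/
def Incident {L : ℕ} (s : Vertex L) (e : Edge L) : Prop :=
  s = e.ends.1 ∨ s = e.ends.2

instance {L : ℕ} (s : Vertex L) (e : Edge L) : Decidable (Incident s e) := by
  unfold Incident; infer_instance

/-- The star δs: the set of edges incident to a vertex s. -/
def star {L : ℕ} (s : Vertex L) : Finset (Edge L) :=
  Finset.univ.filter (fun e => Incident s e)

/-- The boundary ∂p of the plaquette p = (i,j): the four edges of the unit square
with corners (i,j), (i+1,j), (i,j+1), (i+1,j+1). -/
def pBoundary {L : ℕ} (p : Fin L × Fin L) : Finset (Edge L) :=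
  {Edge.horiz p.1 p.2.castSucc, Edge.horiz p.1 p.2.succ,
   Edge.vert p.1.castSucc p.2, Edge.vert p.1.succ p.2}


/-- A 1-chain x : E(𝓛) → ZMod 2 is a 1-cycle iff ∑_{e ∈ δs} x_e = 0 for every vertex s. -/
def IsCycle {L : ℕ} (x : Edge L → ZMod 2) : Prop :=
  ∀ s : Vertex L, ∑ e ∈ star s, x e = 0

/-- Faces of the L×L square lattice: the L² plaquettes together with one outer face. -/
abbrev Face (L : ℕ) := (Fin L × Fin L) ⊕ Unit

/-- The two faces adjacent to an edge: a horizontal edge {(i,j),(i+1,j)} is adjacent to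
plaquette (i,j) (outer if j = L) and plaquette (i,j-1) (outer if j = 0); a vertical edge
{(i,j),(i,j+1)} is adjacent to plaquette (i,j) (outer if i = L) and plaquette (i-1,j)
(outer if i = 0). -/
def edgeFaces {L : ℕ} : Edge L → Face L × Face L
  | .horiz i j =>
      ((if h : (j : ℕ) < L then Sum.inl (i, ⟨(j : ℕ), h⟩) else Sum.inr ()),
       (if h : 0 < (j : ℕ) then
          Sum.inl (i, ⟨(j : ℕ) - 1, by have := j.isLt; omega⟩) else Sum.inr ()))
  | .vert i j =>
      ((if h : (i : ℕ) < L then Sum.inl (⟨(i : ℕ), h⟩, j) else Sum.inr ()),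
       (if h : 0 < (i : ℕ) then
          Sum.inl (⟨(i : ℕ) - 1, by have := i.isLt; omega⟩, j) else Sum.inr ()))

/-- The 𝔽₂-linear map Ψ sending a face (Ising-spin) configuration σ to the 1-chain
x with x_e = σ_f + σ_g, where f, g are the two faces adjacent to e. -/
def Psi {L : ℕ} (σ : Face L → ZMod 2) : Edge L → ZMod 2 :=
  fun e => σ (edgeFaces e).1 + σ (edgeFaces e).2
namespace IsingAux

variable {L : ℕ}

lemma z2self : ∀ u : ZMod 2, u + u = 0 := by decide
lemma z2eq : ∀ u v : ZMod 2, u + v = 0 → u = v := by decide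

/-- horizontal edge value, extended by 0 out of range -/
def xh (x : Edge L → ZMod 2) (i j : ℕ) : ZMod 2 :=
  if h : i < L ∧ j < L + 1 then x (.horiz ⟨i, h.1⟩ ⟨j, h.2⟩) else 0

/-- vertical edge value, extended by 0 out of range -/
def xv (x : Edge L → ZMod 2) (i j : ℕ) : ZMod 2 :=
  if h : i < L + 1 ∧ j < L then x (.vert ⟨i, h.1⟩ ⟨j, h.2⟩) else 0

lemma xh_eq (x : Edge L → ZMod 2) {i : ℕ} (h : i < L) (b : Fin (L+1)) :
    xh x i ↑b = x (.horiz ⟨i, h⟩ b) := by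
  rw [xh, dif_pos ⟨h, b.isLt⟩]

lemma xh_zero (x : Edge L → ZMod 2) {i : ℕ} (h : ¬ i < L) (j : ℕ) :
    xh x i j = 0 := by
  rw [xh, dif_neg]; tauto

lemma xv_eq (x : Edge L → ZMod 2) (a : Fin (L+1)) {j : ℕ} (h : j < L) :
    xv x ↑a j = x (.vert a ⟨j, h⟩) := by
  rw [xv, dif_pos ⟨a.isLt, h⟩]

lemma xv_zero (x : Edge L → ZMod 2) (i : ℕ) {j : ℕ} (h : ¬ j < L) :
    xv x i j = 0 := by
  rw [xv, dif_neg]; tauto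

def eEquiv (L : ℕ) : (Fin L × Fin (L+1)) ⊕ (Fin (L+1) × Fin L) ≃ Edge L where
  toFun := Sum.elim (fun p => .horiz p.1 p.2) (fun p => .vert p.1 p.2)
  invFun e := match e with
    | .horiz i j => .inl (i, j)
    | .vert i j => .inr (i, j)
  left_inv := by rintro (⟨i, j⟩ | ⟨i, j⟩) <;> rfl
  right_inv := by intro e; cases e <;> rfl

lemma sum_pick {n : ℕ} {M : Type*} [AddCommMonoid M] (P : Prop) [Decidable P]
    (b : Fin n) (f : Fin n → M) :
    ∑ j : Fin n, (if P ∧ b = j then f j else 0) = if P then f b else 0 := by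
  by_cases hP : P
  · simp [hP, Finset.sum_ite_eq]
  · simp [hP]

lemma sum_castSucc {M : Type*} [AddCommMonoid M] (a : Fin (L+1)) (f : Fin L → M) :
    ∑ i : Fin L, (if a = i.castSucc then f i else 0)
      = if h : (a : ℕ) < L then f ⟨a, h⟩ else 0 := by
  by_cases h : (a : ℕ) < L
  · rw [dif_pos h]
    have key : ∀ i : Fin L, (a = i.castSucc) ↔ ((⟨(a:ℕ), h⟩ : Fin L) = i) := by
      intro i
      constructor
      · intro e; apply Fin.ext; simpa [Fin.ext_iff] using e
      · intro e; apply Fin.ext; have := congrArg Fin.val e; simpa using this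
    simp only [key]
    simp [Finset.sum_ite_eq]
  · rw [dif_neg h]
    apply Finset.sum_eq_zero
    intro i _
    rw [if_neg]
    intro e
    exact h (e ▸ i.isLt)

lemma sum_succ {M : Type*} [AddCommMonoid M] (a : Fin (L+1)) (f : Fin L → M) :
    ∑ i : Fin L, (if a = i.succ then f i else 0)
      = if h : 0 < (a : ℕ) then f ⟨(a:ℕ) - 1, by have := a.isLt; omega⟩ else 0 := by
  by_cases h : 0 < (a : ℕ)
  · rw [dif_pos h]
    have hlt : (a:ℕ) - 1 < L := by have := a.isLt; omega
    have key : ∀ i : Fin L, (a = i.succ) ↔ ((⟨(a:ℕ) - 1, hlt⟩ : Fin L) = i) := by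
      intro i
      constructor
      · intro e; apply Fin.ext; have := congrArg Fin.val e; simp [Fin.val_succ] at this; simp [this]
      · intro e; apply Fin.ext; have := congrArg Fin.val e; simp at this; simp [Fin.val_succ]; omega
    simp only [key]
    simp [Finset.sum_ite_eq]
  · rw [dif_neg h]
    apply Finset.sum_eq_zero
    intro i _
    rw [if_neg]
    intro e
    have := congrArg Fin.val e
    simp [Fin.val_succ] at this
    omega

end IsingAux
namespace IsingAux

variable {L : ℕ}

lemma ite_or_split {M : Type*} [AddCommMonoid M] {p q : Prop} [Decidable p] [Decidable q]
    (h : ¬(p ∧ q)) (v : M) : (if p ∨ q then v else 0) = (if p then v else 0) + (if q then v else 0) := by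
  by_cases hp : p <;> by_cases hq : q <;> simp [hp, hq] <;> exact absurd ⟨hp, hq⟩ h

lemma horiz_half (x : Edge L → ZMod 2) (a b : Fin (L+1)) :
    ∑ i : Fin L, ∑ j : Fin (L+1),
        (if Incident (a, b) (Edge.horiz i j) then x (Edge.horiz i j) else 0)
      = xh x ↑a ↑b + (if (a:ℕ) = 0 then 0 else xh x (↑a - 1) ↑b) := by
  have step : ∀ i : Fin L, ∑ j : Fin (L+1),
      (if Incident (a, b) (Edge.horiz i j) then x (Edge.horiz i j) else 0)
      = (if a = i.castSucc then x (.horiz i b) else 0)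
        + (if a = i.succ then x (.horiz i b) else 0) := by
    intro i
    have hcond : ∀ j : Fin (L+1), Incident (a, b) (Edge.horiz i j)
        ↔ ((a = i.castSucc ∨ a = i.succ) ∧ b = j) := by
      intro j; simp only [Incident, Edge.ends, Prod.mk.injEq]; tauto
    calc ∑ j : Fin (L+1), (if Incident (a, b) (Edge.horiz i j) then x (Edge.horiz i j) else 0)
        = ∑ j : Fin (L+1), (if (a = i.castSucc ∨ a = i.succ) ∧ b = j
            then x (Edge.horiz i j) else 0) := by
          apply Finset.sum_congr rfl; intro j _; simp only [hcond]
      _ = (if a = i.castSucc ∨ a = i.succ then x (.horiz i b) else 0) :=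
          sum_pick _ b _
      _ = _ := by
          apply ite_or_split
          rintro ⟨h1, h2⟩
          have := congrArg Fin.val (h1.symm.trans h2)
          simp [Fin.val_succ] at this
  rw [Finset.sum_congr rfl (fun i _ => step i), Finset.sum_add_distrib,
    sum_castSucc, sum_succ]
  congr 1
  · by_cases h : (a:ℕ) < L
    · rw [dif_pos h, xh_eq x h b]
    · rw [dif_neg h, xh_zero x h]
  · by_cases h : 0 < (a:ℕ)
    · rw [dif_pos h, if_neg (by omega), xh_eq x (show (a:ℕ)-1 < L by have := a.isLt; omega) b]
    · rw [dif_neg h, if_pos (by omega)]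

lemma vert_half (x : Edge L → ZMod 2) (a b : Fin (L+1)) :
    ∑ i : Fin (L+1), ∑ j : Fin L,
        (if Incident (a, b) (Edge.vert i j) then x (Edge.vert i j) else 0)
      = xv x ↑a ↑b + (if (b:ℕ) = 0 then 0 else xv x ↑a (↑b - 1)) := by
  have step : ∀ i : Fin (L+1), ∑ j : Fin L,
      (if Incident (a, b) (Edge.vert i j) then x (Edge.vert i j) else 0)
      = (if a = i then
          ((if h : (b:ℕ) < L then x (.vert i ⟨↑b, h⟩) else 0)
            + (if h : 0 < (b:ℕ) then x (.vert i ⟨(b:ℕ) - 1, by have := b.isLt; omega⟩) else 0))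
         else 0) := by
    intro i
    have hcond : ∀ j : Fin L, Incident (a, b) (Edge.vert i j)
        ↔ (a = i ∧ (b = j.castSucc ∨ b = j.succ)) := by
      intro j; simp only [Incident, Edge.ends, Prod.mk.injEq]; tauto
    by_cases hai : a = i
    · calc ∑ j : Fin L, (if Incident (a, b) (Edge.vert i j) then x (Edge.vert i j) else 0)
          = ∑ j : Fin L, ((if b = j.castSucc then x (.vert i j) else 0)
              + (if b = j.succ then x (.vert i j) else 0)) := by
            apply Finset.sum_congr rfl; intro j _
            rw [if_congr (show Incident (a, b) (Edge.vert i j) ↔ (b = j.castSucc ∨ b = j.succ) by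
              rw [hcond j]; simp [hai]) rfl rfl]
            apply ite_or_split
            rintro ⟨h1, h2⟩
            have := congrArg Fin.val (h1.symm.trans h2)
            simp [Fin.val_succ] at this
        _ = _ := by
            rw [Finset.sum_add_distrib, sum_castSucc, sum_succ, if_pos hai]
    · rw [if_neg hai]
      apply Finset.sum_eq_zero
      intro j _
      rw [if_neg]
      rw [hcond j]
      tauto
  rw [Finset.sum_congr rfl (fun i _ => step i)]
  rw [Finset.sum_ite_eq]
  simp only [Finset.mem_univ, if_pos]
  congr 1
  · by_cases h : (b:ℕ) < L
    · rw [dif_pos h, xv_eq x a h]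
    · rw [dif_neg h, xv_zero x _ h]
  · by_cases h : 0 < (b:ℕ)
    · rw [dif_pos h, if_neg (by omega), xv_eq x a (show (b:ℕ)-1 < L by have := b.isLt; omega)]
    · rw [dif_neg h, if_pos (by omega)]

lemma star_eq (x : Edge L → ZMod 2) (a b : Fin (L+1)) :
    ∑ e ∈ star (a, b), x e
      = (xh x ↑a ↑b + (if (a:ℕ) = 0 then 0 else xh x (↑a - 1) ↑b))
        + (xv x ↑a ↑b + (if (b:ℕ) = 0 then 0 else xv x ↑a (↑b - 1))) := by
  rw [show (_root_.star (a, b) : Finset (Edge L))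
      = Finset.univ.filter (fun e => Incident (a, b) e) from rfl]
  rw [Finset.sum_filter]
  rw [← Fintype.sum_bijective (eEquiv L) (Equiv.bijective _)
    (fun z => if Incident (a, b) (eEquiv L z) then x (eEquiv L z) else 0)
    (fun e => if Incident (a, b) e then x e else 0) (fun z => rfl)]
  rw [Fintype.sum_sum_type]
  simp only [eEquiv, Equiv.coe_fn_mk, Sum.elim_inl, Sum.elim_inr]
  rw [Fintype.sum_prod_type, Fintype.sum_prod_type]
  exact congrArg₂ (· + ·) (horiz_half x a b) (vert_half x a b)

end IsingAux
namespace IsingAux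

variable {L : ℕ}

lemma star_nat {x : Edge L → ZMod 2} (hx : IsCycle x) {c m : ℕ}
    (hc : c < L + 1) (hm : m < L + 1) :
    (xh x c m + (if c = 0 then 0 else xh x (c - 1) m))
      + (xv x c m + (if m = 0 then 0 else xv x c (m - 1))) = 0 := by
  have := (star_eq x ⟨c, hc⟩ ⟨m, hm⟩).symm.trans (hx (⟨c, hc⟩, ⟨m, hm⟩))
  simpa using this

lemma tele (f : ℕ → ZMod 2) (n : ℕ) :
    ∑ k ∈ Finset.range (n + 1), f k + ∑ k ∈ Finset.range n, f k = f n := by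
  rw [Finset.sum_range_succ, add_right_comm, z2self, zero_add]

lemma shift (f : ℕ → ZMod 2) (n : ℕ) :
    ∑ c ∈ Finset.range (n + 1), (if c = 0 then 0 else f (c - 1))
      = ∑ k ∈ Finset.range n, f k := by
  rw [Finset.sum_range_succ']
  simp

lemma colH (x : Edge L → ZMod 2) (m : ℕ) :
    ∑ c ∈ Finset.range (L + 1), (xh x c m + (if c = 0 then 0 else xh x (c - 1) m)) = 0 := by
  have hs : ∑ c ∈ Finset.range (L + 1), (if c = 0 then 0 else xh x (c - 1) m)
      = ∑ k ∈ Finset.range L, xh x k m := shift (fun k => xh x k m) L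
  rw [Finset.sum_add_distrib, hs, Finset.sum_range_succ, xh_zero x (lt_irrefl L) m,
    add_zero, z2self]

lemma rowV (x : Edge L → ZMod 2) (c j : ℕ) :
    ∑ m ∈ Finset.range (j + 1), (xv x c m + (if m = 0 then 0 else xv x c (m - 1)))
      = xv x c j := by
  have hs : ∑ m ∈ Finset.range (j + 1), (if m = 0 then 0 else xv x c (m - 1))
      = ∑ k ∈ Finset.range j, xv x c k := shift (fun k => xv x c k) j
  rw [Finset.sum_add_distrib, hs]
  exact tele (fun k => xv x c k) j

lemma col {x : Edge L → ZMod 2} (hx : IsCycle x) {j : ℕ} (hj : j < L) :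
    ∑ k ∈ Finset.range (L + 1), xv x k j = 0 := by
  have h0 : ∑ c ∈ Finset.range (L + 1), ∑ m ∈ Finset.range (j + 1),
      ((xh x c m + (if c = 0 then 0 else xh x (c - 1) m))
        + (xv x c m + (if m = 0 then 0 else xv x c (m - 1)))) = 0 := by
    apply Finset.sum_eq_zero
    intro c hc
    apply Finset.sum_eq_zero
    intro m hm
    exact star_nat hx (Finset.mem_range.mp hc) (by have := Finset.mem_range.mp hm; omega)
  calc ∑ k ∈ Finset.range (L + 1), xv x k j
      = ∑ c ∈ Finset.range (L + 1), ∑ m ∈ Finset.range (j + 1),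
          ((xh x c m + (if c = 0 then 0 else xh x (c - 1) m))
            + (xv x c m + (if m = 0 then 0 else xv x c (m - 1)))) := by
        rw [show (∑ c ∈ Finset.range (L + 1), ∑ m ∈ Finset.range (j + 1),
            ((xh x c m + (if c = 0 then 0 else xh x (c - 1) m))
              + (xv x c m + (if m = 0 then 0 else xv x c (m - 1)))))
          = ∑ c ∈ Finset.range (L + 1),
              ((∑ m ∈ Finset.range (j + 1), (xh x c m + (if c = 0 then 0 else xh x (c - 1) m)))
               + ∑ m ∈ Finset.range (j + 1), (xv x c m + (if m = 0 then 0 else xv x c (m - 1))))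
          from Finset.sum_congr rfl (fun c _ => Finset.sum_add_distrib)]
        rw [Finset.sum_add_distrib]
        rw [Finset.sum_comm (s := Finset.range (L+1)) (t := Finset.range (j+1))]
        rw [Finset.sum_congr rfl (fun m _ => colH x m), Finset.sum_const_zero, zero_add]
        exact (Finset.sum_congr rfl (fun c _ => rowV x c j)).symm
    _ = 0 := h0

lemma row {x : Edge L → ZMod 2} (hx : IsCycle x) {i : ℕ} (hi : i < L) {b : ℕ} (hb : b < L + 1) :
    ∑ k ∈ Finset.range (i + 1), (xv x k b + (if b = 0 then 0 else xv x k (b - 1)))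
      = xh x i b := by
  have h0 : ∑ c ∈ Finset.range (i + 1),
      ((xh x c b + (if c = 0 then 0 else xh x (c - 1) b))
        + (xv x c b + (if b = 0 then 0 else xv x c (b - 1)))) = 0 := by
    apply Finset.sum_eq_zero
    intro c hc
    exact star_nat hx (by have := Finset.mem_range.mp hc; omega) hb
  rw [Finset.sum_add_distrib] at h0
  have hs : ∑ c ∈ Finset.range (i + 1), (if c = 0 then 0 else xh x (c - 1) b)
      = ∑ k ∈ Finset.range i, xh x k b := shift (fun k => xh x k b) i
  rw [show (∑ c ∈ Finset.range (i + 1), (xh x c b + (if c = 0 then 0 else xh x (c - 1) b)))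
      = xh x i b by rw [Finset.sum_add_distrib, hs]; exact tele (fun k => xh x k b) i] at h0
  exact (z2eq _ _ h0).symm

end IsingAux
namespace IsingAux

variable {L : ℕ}

lemma xh_psi (σ : Face L → ZMod 2) {i j : ℕ} (hi : i < L) (hj : j < L + 1) :
    xh (Psi σ) i j
      = ((if h : j < L then σ (Sum.inl (⟨i, hi⟩, ⟨j, h⟩)) else σ (Sum.inr ()))
        + (if h : 0 < j then σ (Sum.inl (⟨i, hi⟩, ⟨j - 1, by omega⟩)) else σ (Sum.inr ()))) := by
  rw [xh, dif_pos ⟨hi, hj⟩]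
  simp only [Psi, edgeFaces]
  by_cases h1 : j < L <;> by_cases h2 : 0 < j <;> simp [h1, h2]

lemma xv_psi (σ : Face L → ZMod 2) {i j : ℕ} (hi : i < L + 1) (hj : j < L) :
    xv (Psi σ) i j
      = ((if h : i < L then σ (Sum.inl (⟨i, h⟩, ⟨j, hj⟩)) else σ (Sum.inr ()))
        + (if h : 0 < i then σ (Sum.inl (⟨i - 1, by omega⟩, ⟨j, hj⟩)) else σ (Sum.inr ()))) := by
  rw [xv, dif_pos ⟨hi, hj⟩]
  simp only [Psi, edgeFaces]
  by_cases h1 : i < L <;> by_cases h2 : 0 < i <;> simp [h1, h2]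

lemma isCycle_psi (hL : 1 ≤ L) (σ : Face L → ZMod 2) : IsCycle (Psi σ) := by
  rintro ⟨a, b⟩
  rw [star_eq]
  have hA := a.isLt
  have hB := b.isLt
  by_cases hAL : (a:ℕ) < L <;> by_cases hA0 : 0 < (a:ℕ) <;>
    by_cases hBL : (b:ℕ) < L <;> by_cases hB0 : 0 < (b:ℕ) <;>
  first
  | omega
  | (try rw [xh_psi σ hAL hB]
     try rw [xh_zero (Psi σ) hAL]
     try rw [if_neg (show ¬ (a:ℕ) = 0 by omega), xh_psi σ (show (a:ℕ) - 1 < L by omega) hB]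
     try rw [if_pos (show (a:ℕ) = 0 by omega)]
     try rw [xv_psi σ hA hBL]
     try rw [xv_zero (Psi σ) (↑a) hBL]
     try rw [if_neg (show ¬ (b:ℕ) = 0 by omega), xv_psi σ hA (show (b:ℕ) - 1 < L by omega)]
     try rw [if_pos (show (b:ℕ) = 0 by omega)]
     split_ifs <;> try omega
     all_goals (abel_nf; try simp [two_smul, z2self]))


/-- candidate face configuration for a given 1-chain -/
def sigma0 (x : Edge L → ZMod 2) : Face L → ZMod 2
  | .inl p => ∑ k ∈ Finset.range ((p.1 : ℕ) + 1), xv x k (p.2 : ℕ)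
  | .inr _ => 0

lemma psi_sigma0 (hL : 1 ≤ L) {x : Edge L → ZMod 2} (hx : IsCycle x) :
    Psi (sigma0 x) = x := by
  funext e
  cases e with
  | horiz i b =>
    show sigma0 x (edgeFaces (.horiz i b)).1 + sigma0 x (edgeFaces (.horiz i b)).2
        = x (.horiz i b)
    have hA : sigma0 x (edgeFaces (Edge.horiz i b)).1
        = ∑ k ∈ Finset.range ((i : ℕ) + 1), xv x k (b : ℕ) := by
      simp only [edgeFaces]
      by_cases h : (b:ℕ) < L
      · rw [dif_pos h]; rfl
      · rw [dif_neg h]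
        exact (Finset.sum_eq_zero (fun k _ => xv_zero x k h)).symm
    have hBc : sigma0 x (edgeFaces (Edge.horiz i b)).2
        = ∑ k ∈ Finset.range ((i : ℕ) + 1),
            (if (b:ℕ) = 0 then 0 else xv x k ((b:ℕ) - 1)) := by
      simp only [edgeFaces]
      by_cases h : 0 < (b:ℕ)
      · rw [dif_pos h]
        exact Finset.sum_congr rfl (fun k _ => by rw [if_neg (by omega)])
      · rw [dif_neg h]
        simp [show (b:ℕ) = 0 by omega, sigma0]
    rw [hA, hBc, ← Finset.sum_add_distrib, row hx i.isLt b.isLt, xh_eq x i.isLt b]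
  | vert a j =>
    show sigma0 x (edgeFaces (.vert a j)).1 + sigma0 x (edgeFaces (.vert a j)).2
        = x (.vert a j)
    simp only [edgeFaces]
    by_cases hAL : (a:ℕ) < L <;> by_cases hA0 : 0 < (a:ℕ)
    · -- interior
      rw [dif_pos hAL, dif_pos hA0]
      show (∑ k ∈ Finset.range ((a:ℕ) + 1), xv x k (j:ℕ))
          + (∑ k ∈ Finset.range (((a:ℕ) - 1) + 1), xv x k (j:ℕ)) = x (.vert a j)
      rw [show ((a:ℕ) - 1) + 1 = (a:ℕ) by omega, tele (fun k => xv x k (j:ℕ)) (a:ℕ),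
        xv_eq x a j.isLt, Fin.eta]
    · -- a = 0
      rw [dif_pos hAL, dif_neg hA0]
      show (∑ k ∈ Finset.range ((a:ℕ) + 1), xv x k (j:ℕ)) + 0 = x (.vert a j)
      rw [show (a:ℕ) = 0 by omega, Finset.sum_range_one, add_zero,
        show (0:ℕ) = (a:ℕ) by omega, xv_eq x a j.isLt, Fin.eta]
    · -- a = L
      rw [dif_neg hAL, dif_pos hA0]
      have ha : (a:ℕ) = L := by have := a.isLt; omega
      show 0 + (∑ k ∈ Finset.range (((a:ℕ) - 1) + 1), xv x k (j:ℕ)) = x (.vert a j)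
      rw [zero_add, show ((a:ℕ) - 1) + 1 = (a:ℕ) by omega, ha]
      have hc := col hx j.isLt (x := x)
      rw [Finset.sum_range_succ] at hc
      rw [(z2eq _ _ hc)]
      have haf : a = (⟨L, by omega⟩ : Fin (L+1)) := Fin.ext (by simpa using ha)
      rw [haf]
      exact (xv_eq x ⟨L, by omega⟩ j.isLt).trans (by rw [Fin.eta])
    · omega

end IsingAux
namespace IsingAux

variable {L : ℕ}

lemma z2cases : ∀ u : ZMod 2, u = 0 ∨ u = 1 := by decide
lemma z2ne : ∀ u : ZMod 2, u ≠ u + 1 := by decide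
lemma z2solve : ∀ u v c : ZMod 2, u + v = c → u = v + c := by decide

lemma ker_const (hL : 1 ≤ L) {σ : Face L → ZMod 2} (h : Psi σ = 0) :
    ∀ f : Face L, σ f = σ (.inr ()) := by
  have he : ∀ e : Edge L, σ (edgeFaces e).1 = σ (edgeFaces e).2 :=
    fun e => z2eq _ _ (congrFun h e)
  have claim : ∀ k, ∀ (hk : k < L) (j : Fin L), σ (.inl (⟨k, hk⟩, j)) = σ (.inr ()) := by
    intro k
    induction k with
    | zero =>
      intro hk j
      have h0 := he (.vert ⟨0, by omega⟩ j)
      simp only [edgeFaces] at h0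
      rw [dif_pos (show ((⟨0, by omega⟩ : Fin (L+1)) : ℕ) < L from hk),
        dif_neg (by simp)] at h0
      exact h0
    | succ k ih =>
      intro hk j
      have h0 := he (.vert ⟨k + 1, by omega⟩ j)
      simp only [edgeFaces] at h0
      rw [dif_pos (show ((⟨k + 1, by omega⟩ : Fin (L+1)) : ℕ) < L from hk),
        dif_pos (show 0 < ((⟨k + 1, by omega⟩ : Fin (L+1)) : ℕ) by simp)] at h0
      exact h0.trans (by exact ih (by omega) j)
  rintro (⟨i, j⟩ | ⟨⟩)
  · exact claim ↑i i.isLt j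
  · rfl

lemma psi_ker_iff (hL : 1 ≤ L) (σ : Face L → ZMod 2) :
    Psi σ = 0 ↔ (σ = fun _ => 0) ∨ (σ = fun _ => 1) := by
  constructor
  · intro h
    have hc := ker_const hL h
    rcases z2cases (σ (.inr ())) with h0 | h1
    · left; funext f; rw [hc f, h0]
    · right; funext f; rw [hc f, h1]
  · rintro (rfl | rfl) <;> funext e <;> simp only [Psi] <;> exact z2self _

theorem main (L : ℕ) (hL : 1 ≤ L) :
    Set.range (Psi (L := L)) = {x : Edge L → ZMod 2 | IsCycle x} ∧
    (∀ σ : Face L → ZMod 2,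
        Psi σ = 0 ↔ (σ = fun _ => 0) ∨ (σ = fun _ => 1)) ∧
    (∀ x : Edge L → ZMod 2, IsCycle x →
        Nat.card {σ : Face L → ZMod 2 // Psi σ = x} = 2) := by
  refine ⟨?_, psi_ker_iff hL, ?_⟩
  · ext x
    constructor
    · rintro ⟨σ, rfl⟩
      exact isCycle_psi hL σ
    · intro hx
      exact ⟨sigma0 x, psi_sigma0 hL hx⟩
  · intro x hx
    set σ₀ : Face L → ZMod 2 := sigma0 x with hσ₀
    have h₀ : Psi σ₀ = x := psi_sigma0 hL hx
    have key : ∀ σ : Face L → ZMod 2, Psi σ = x ↔ (σ = σ₀ ∨ σ = fun f => σ₀ f + 1) := by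
      intro σ
      constructor
      · intro hσ
        have hsum : Psi (fun f => σ f + σ₀ f) = 0 := by
          funext e
          have h1 := congrFun hσ e
          have h2 := congrFun h₀ e
          simp only [Psi, Pi.zero_apply] at h1 h2 ⊢
          linear_combination h1 + h2 + z2self (x e)
        rcases (psi_ker_iff hL _).mp hsum with h | h
        · left; funext f
          have := congrFun h f
          have := z2solve _ _ _ this
          simpa using this
        · right; funext f
          have := congrFun h f
          exact z2solve _ _ _ this
      · rintro (rfl | rfl)
        · exact h₀
        · funext e
          have h2 := congrFun h₀ e
          simp only [Psi] at h2 ⊢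
          linear_combination h2 + z2self 1
    have hset : {σ : Face L → ZMod 2 | Psi σ = x} = {σ₀, fun f => σ₀ f + 1} := by
      ext σ
      simp [key σ, Set.mem_insert_iff]
    have hne : σ₀ ≠ fun f => σ₀ f + 1 := by
      intro h
      exact z2ne (σ₀ (.inr ())) (congrFun h (.inr ()))
    calc Nat.card {σ : Face L → ZMod 2 // Psi σ = x}
        = Set.ncard {σ : Face L → ZMod 2 | Psi σ = x} := Nat.card_coe_set_eq _
      _ = 2 := by rw [hset]; exact Set.ncard_pair hne

end IsingAux

/-- the image of Ψ is exactly the cycle space 𝒵, its kernel consists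
exactly of the two constant configurations, and hence Ψ is two-to-one onto 𝒵. -/
theorem ising_parametrization_of_cycles (L : ℕ) (hL : 1 ≤ L) :
    Set.range (Psi (L := L)) = {x : Edge L → ZMod 2 | IsCycle x} ∧
    (∀ σ : Face L → ZMod 2,
        Psi σ = 0 ↔ (σ = fun _ => 0) ∨ (σ = fun _ => 1)) ∧
    (∀ x : Edge L → ZMod 2, IsCycle x →
        Nat.card {σ : Face L → ZMod 2 // Psi σ = x} = 2) := by
  exact IsingAux.main L hL
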